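/- arXiv:2403.00874 — 3 statements merged into one kernel-verified Lean document; each statement's English description precedes it below -/
import Mathlib

section
/- Let u(t,x) = a(t,x) + z(t,x) where a, p, q are holomorphic near the origin in ℂ^2, z satisfies z^3 = p·z + q with 3z^2 - p ≠ 0, and suppose a_x = 0, q_t = a·q_x + (1/3)·p·p_x, p_t = a·p_x + q_x, and a_t = (1/3)·p_x. Then u satisfies the inviscid Burgers equation u_t - u·u_x = 0. -/
/-- Partial derivative in the first (time) variable. -/
noncomputable def pdt (f : ℂ × ℂ → ℂ) (w : ℂ × ℂ) : ℂ :=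
  deriv (fun s => f (s, w.2)) w.1

/-- Partial derivative in the second (space) variable. -/
noncomputable def pdx (f : ℂ × ℂ → ℂ) (w : ℂ × ℂ) : ℂ :=
  deriv (fun y => f (w.1, y)) w.2

/-!
Differentiating `z³ = p z + q` implicitly in `t` and in `x` gives
`z_t (3z² - p) = p_t z + q_t` and `z_x (3z² - p) = p_x z + q_x`. Multiplying `u_t - u u_x` by
`3z² - p` and substituting these together with the evolution equations for `a`, `p`, `q`
leaves an expression that vanishes identically, and `3z² - p ≠ 0`.
-/

open Filter Topology

theorem HasDerivAt.mul_three_sq_sub_eq_of_cube_eq {𝕜 : Type*} [NontriviallyNormedField 𝕜]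
    {f g h : 𝕜 → 𝕜} {f' g' h' x : 𝕜} (hf : HasDerivAt f f' x) (hg : HasDerivAt g g' x)
    (hh : HasDerivAt h h' x) (hcube : ∀ᶠ y in 𝓝 x, f y ^ 3 = g y * f y + h y) :
    f' * (3 * f x ^ 2 - g x) = g' * f x + h' := by
  have hcube' : HasDerivAt (fun y => f y ^ 3) (g' * f x + g x * f' + h') x :=
    ((hg.mul hf).add hh).congr_of_eventuallyEq hcube
  have := (hf.pow 3).unique hcube'
  norm_num at this
  linear_combination this

section Slices

variable {f : ℂ × ℂ → ℂ} {w : ℂ × ℂ}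

theorem DifferentiableAt.hasDerivAt_pdt (hf : DifferentiableAt ℂ f w) :
    HasDerivAt (fun s => f (s, w.2)) (pdt f w) w.1 :=
  (hf.comp w.1 (differentiableAt_id.prodMk (differentiableAt_const w.2))).hasDerivAt

theorem DifferentiableAt.hasDerivAt_pdx (hf : DifferentiableAt ℂ f w) :
    HasDerivAt (fun y => f (w.1, y)) (pdx f w) w.2 :=
  (hf.comp w.2 ((differentiableAt_const w.1).prodMk differentiableAt_id)).hasDerivAt

theorem pdt_add {g : ℂ × ℂ → ℂ} (hf : DifferentiableAt ℂ f w) (hg : DifferentiableAt ℂ g w) :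
    pdt (fun v => f v + g v) w = pdt f w + pdt g w :=
  (hf.hasDerivAt_pdt.add hg.hasDerivAt_pdt).deriv

theorem pdx_add {g : ℂ × ℂ → ℂ} (hf : DifferentiableAt ℂ f w) (hg : DifferentiableAt ℂ g w) :
    pdx (fun v => f v + g v) w = pdx f w + pdx g w :=
  (hf.hasDerivAt_pdx.add hg.hasDerivAt_pdx).deriv

theorem Filter.Eventually.slice_fst {P : ℂ × ℂ → Prop} (h : ∀ᶠ v in 𝓝 w, P v) :
    ∀ᶠ s in 𝓝 w.1, P (s, w.2) :=
  ((continuous_id.prodMk continuous_const).tendsto' w.1 w rfl).eventually h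

theorem Filter.Eventually.slice_snd {P : ℂ × ℂ → Prop} (h : ∀ᶠ v in 𝓝 w, P v) :
    ∀ᶠ y in 𝓝 w.2, P (w.1, y) :=
  ((continuous_const.prodMk continuous_id).tendsto' w.2 w rfl).eventually h

variable {p q z : ℂ × ℂ → ℂ}

theorem pdt_mul_three_sq_sub_eq_of_cube_eq (hp : DifferentiableAt ℂ p w)
    (hq : DifferentiableAt ℂ q w) (hz : DifferentiableAt ℂ z w)
    (hcube : ∀ᶠ v in 𝓝 w, z v ^ 3 = p v * z v + q v) :
    pdt z w * (3 * z w ^ 2 - p w) = pdt p w * z w + pdt q w :=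
  hz.hasDerivAt_pdt.mul_three_sq_sub_eq_of_cube_eq hp.hasDerivAt_pdt hq.hasDerivAt_pdt
    hcube.slice_fst

theorem pdx_mul_three_sq_sub_eq_of_cube_eq (hp : DifferentiableAt ℂ p w)
    (hq : DifferentiableAt ℂ q w) (hz : DifferentiableAt ℂ z w)
    (hcube : ∀ᶠ v in 𝓝 w, z v ^ 3 = p v * z v + q v) :
    pdx z w * (3 * z w ^ 2 - p w) = pdx p w * z w + pdx q w :=
  hz.hasDerivAt_pdx.mul_three_sq_sub_eq_of_cube_eq hp.hasDerivAt_pdx hq.hasDerivAt_pdx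
    hcube.slice_snd

end Slices

theorem stmt_5_general (U : Set (ℂ × ℂ)) (hU : IsOpen U)
    (a p q z : ℂ × ℂ → ℂ)
    (ha : ∀ w ∈ U, DifferentiableAt ℂ a w)
    (hp : ∀ w ∈ U, DifferentiableAt ℂ p w)
    (hq : ∀ w ∈ U, DifferentiableAt ℂ q w)
    (hz : ∀ w ∈ U, DifferentiableAt ℂ z w)
    (hrel : ∀ w ∈ U, z w ^ 3 = p w * z w + q w)
    (hne : ∀ w ∈ U, 3 * z w ^ 2 - p w ≠ 0)
    (hax : ∀ w ∈ U, pdx a w = 0)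
    (hqt : ∀ w ∈ U, pdt q w = a w * pdx q w + (1 / 3) * p w * pdx p w)
    (hpt : ∀ w ∈ U, pdt p w = a w * pdx p w + pdx q w)
    (hat : ∀ w ∈ U, pdt a w = (1 / 3) * pdx p w) :
    ∀ w ∈ U, pdt (fun v => a v + z v) w -
      (a w + z w) * pdx (fun v => a v + z v) w = 0 := by
  intro w hw
  have hcube : ∀ᶠ v in 𝓝 w, z v ^ 3 = p v * z v + q v :=
    eventually_of_mem (hU.mem_nhds hw) hrel
  have hzt := pdt_mul_three_sq_sub_eq_of_cube_eq (hp w hw) (hq w hw) (hz w hw) hcube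
  have hzx := pdx_mul_three_sq_sub_eq_of_cube_eq (hp w hw) (hq w hw) (hz w hw) hcube
  rw [pdt_add (ha w hw) (hz w hw), pdx_add (ha w hw) (hz w hw), hax w hw, hat w hw]
  refine (mul_eq_zero.mp ?_).resolve_right (hne w hw)
  linear_combination hzt - (a w + z w) * hzx + z w * hpt w hw + hqt w hw

theorem stmt_5 (U : Set (ℂ × ℂ)) (hU : IsOpen U) (h0 : (0, 0) ∈ U)
    (a p q z : ℂ × ℂ → ℂ)
    (ha : ∀ w ∈ U, DifferentiableAt ℂ a w)
    (hp : ∀ w ∈ U, DifferentiableAt ℂ p w)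
    (hq : ∀ w ∈ U, DifferentiableAt ℂ q w)
    (hz : ∀ w ∈ U, DifferentiableAt ℂ z w)
    (hrel : ∀ w ∈ U, z w ^ 3 = p w * z w + q w)
    (hne : ∀ w ∈ U, 3 * z w ^ 2 - p w ≠ 0)
    (hax : ∀ w ∈ U, pdx a w = 0)
    (hqt : ∀ w ∈ U, pdt q w = a w * pdx q w + (1 / 3) * p w * pdx p w)
    (hpt : ∀ w ∈ U, pdt p w = a w * pdx p w + pdx q w)
    (hat : ∀ w ∈ U, pdt a w = (1 / 3) * pdx p w) :
    ∀ w ∈ U, pdt (fun v => a v + z v) w -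
      (a w + z w) * pdx (fun v => a v + z v) w = 0 :=
  stmt_5_general U hU a p q z ha hp hq hz hrel hne hax hqt hpt hat
end

section
/- Let z satisfy z^3 = p·z + q with 3z^2 - p ≠ 0. Then ∂_q of the expression (3qz + pz^2)/4 equals z, i.e., the element (3qz + pz^2)/4 is a q-primitive of z. Explicitly: if z : ℂ → ℂ is differentiable with z(q)^3 = p·z(q) + q for fixed p and 3z(q)^2 - p ≠ 0, then d/dq [ (3q·z(q) + p·z(q)^2)/4 ] = z(q). -/
/-! Differentiating the cubic `z³ - p z = q` gives `(3z² - p) z' = 1`. Substituting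
`q = z³ - p z` into the derivative `(3z + (3q + 2pz) z') / 4` of the candidate primitive turns
`3q + 2pz` into `z (3z² - p)`, so the derivative is `(3z + z) / 4 = z`. -/

open Filter Topology

variable {𝕜 : Type*} [NontriviallyNormedField 𝕜]

theorem HasDerivAt.mul_eq_one_of_eventually_leftInverse {f g : 𝕜 → 𝕜} {f' g' x : 𝕜}
    (hg : HasDerivAt g g' (f x)) (hf : HasDerivAt f f' x) (hgf : ∀ᶠ y in 𝓝 x, g (f y) = y) :
    g' * f' = 1 :=
  (hg.comp x hf).unique ((hasDerivAt_id x).congr_of_eventuallyEq hgf)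

section Cubic

variable {p q z' : 𝕜} {z : 𝕜 → 𝕜}

theorem HasDerivAt.cubic_root_mul_eq_one (hz : HasDerivAt z z' q)
    (hrel : ∀ᶠ s in 𝓝 q, z s ^ 3 = p * z s + s) :
    (3 * z q ^ 2 - p) * z' = 1 := by
  have hcubic : HasDerivAt (fun w => w ^ 3 - p * w) (3 * z q ^ 2 - p) (z q) := by
    refine (((hasDerivAt_id' (z q)).fun_pow 3).sub
      ((hasDerivAt_id' (z q)).const_mul p)).congr_deriv ?_
    push_cast
    ring
  refine hcubic.mul_eq_one_of_eventually_leftInverse hz ?_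
  filter_upwards [hrel] with s hs
  linear_combination hs

theorem HasDerivAt.cubic_root_primitive [CharZero 𝕜] (hz : HasDerivAt z z' q)
    (hrel : ∀ᶠ s in 𝓝 q, z s ^ 3 = p * z s + s) :
    HasDerivAt (fun s => (3 * s * z s + p * z s ^ 2) / 4) (z q) q := by
  have hinv := hz.cubic_root_mul_eq_one hrel
  have hprod : HasDerivAt (fun s => (3 * s * z s + p * z s ^ 2) / 4)
      ((3 * z q + (3 * q + 2 * p * z q) * z') / 4) q := by
    refine ((((hasDerivAt_id' q).const_mul 3).fun_mul hz).add
      ((hz.fun_pow 2).const_mul p)).div_const 4 |>.congr_deriv ?_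
    push_cast
    ring
  convert hprod using 1
  linear_combination (-z q / 4) * hinv + (3 * z' / 4) * hrel.self_of_nhds

end Cubic

theorem stmt_9_general (p : ℂ) (U : Set ℂ) (hU : IsOpen U) (z : ℂ → ℂ)
    (hz : ∀ q ∈ U, DifferentiableAt ℂ z q)
    (hrel : ∀ q ∈ U, z q ^ 3 = p * z q + q) :
    ∀ q ∈ U, deriv (fun s : ℂ => (3 * s * z s + p * z s ^ 2) / 4) q = z q := by
  intro q hq
  have hrel_near : ∀ᶠ s in 𝓝 q, z s ^ 3 = p * z s + s :=
    eventually_of_mem (hU.mem_nhds hq) hrel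
  exact ((hz q hq).hasDerivAt.cubic_root_primitive hrel_near).deriv

theorem stmt_9 (p : ℂ) (U : Set ℂ) (hU : IsOpen U) (z : ℂ → ℂ)
    (hz : ∀ q ∈ U, DifferentiableAt ℂ z q)
    (hrel : ∀ q ∈ U, z q ^ 3 = p * z q + q)
    (hne : ∀ q ∈ U, 3 * z q ^ 2 - p ≠ 0) :
    ∀ q ∈ U, deriv (fun s : ℂ => (3 * s * z s + p * z s ^ 2) / 4) q = z q :=
  stmt_9_general p U hU z hz hrel
end

section
/- Define P₁ = (p/3)·ξ₂² - ξ₁², P₂ = (q/2)·ξ₂³ + ξ₁³, P₃ = (4p³ - 27q²)·ξ₁² as functions on ℂ⁴ with coordinates (p, q, ξ₁, ξ₂). Then the common zero set of P₁, P₂, P₃ equals the union of the zero section {(p,q,0,0)} and the set {(3z², -2z³, zλ, λ) : z, λ ∈ ℂ}. -/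
theorem stmt_13 (p q ξ₁ ξ₂ : ℂ) :
    ((p / 3) * ξ₂ ^ 2 - ξ₁ ^ 2 = 0 ∧ (q / 2) * ξ₂ ^ 3 + ξ₁ ^ 3 = 0 ∧
        (4 * p ^ 3 - 27 * q ^ 2) * ξ₁ ^ 2 = 0) ↔
      ((ξ₁ = 0 ∧ ξ₂ = 0) ∨
        ∃ z lam : ℂ, p = 3 * z ^ 2 ∧ q = -2 * z ^ 3 ∧ ξ₁ = z * lam ∧ ξ₂ = lam) := by
  constructor
  · rintro ⟨h1, h2, h3⟩
    by_cases hξ₂ : ξ₂ = 0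
    · left
      subst hξ₂
      refine ⟨?_, rfl⟩
      have : ξ₁ ^ 2 = 0 := by linear_combination -h1
      exact pow_eq_zero_iff (n := 2) (by norm_num) |>.mp this
    · right
      refine ⟨ξ₁ / ξ₂, ξ₂, ?_, ?_, by field_simp, rfl⟩
      · field_simp
        linear_combination 3 * h1
      · field_simp
        linear_combination 2 * h2
  · rintro (⟨h1, h2⟩ | ⟨z, l, hp, hq, h1, h2⟩) <;> subst_vars <;>
      refine ⟨by ring, by ring, by ring⟩
end
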